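/- The standard inclusions [n] → [n + e_j] induce a natural map of FI^m-modules V → Σ_j V; if V = M(W) is an induced module, this map is a split injection. -/

import Mathlib

/-!
`M(W)(A)` is the colimit of `W` over the arrows `[r] ⟶ A`, i.e. `M(W)` is a pointwise left Kan
extension of `W` along `S_r ⊆ FI^m`. An arrow `[r] ⟶ A + e_j` either factors, uniquely, through the
standard inclusion `A ⟶ A + e_j` or does not; keeping the arrows of the first kind (replaced by
their factorization) and killing the others defines a retraction `Σ_j M(W) ⟶ M(W)`. It is
compatible with the `S_r`-action because `S_r` is a groupoid, and natural in `A` because the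
naturality squares of the standard inclusion are pullbacks.
-/
open CategoryTheory Limits
section EXT
variable {a b c N : ℕ}
def extEmb (g : Fin a ↪ Fin b) (N : ℕ) : Fin (a + N) ↪ Fin (b + N) where
  toFun x := if h : (x : ℕ) < a then ⟨g ⟨x, h⟩, by have := (g ⟨x, h⟩).isLt; omega⟩
    else ⟨(x : ℕ) - a + b, by have := x.isLt; omega⟩
  inj' := by
    intro x y hxy
    simp only at hxy
    by_cases hx : (x : ℕ) < a <;> by_cases hy : (y : ℕ) < a
    · rw [dif_pos hx, dif_pos hy, Fin.mk.injEq] at hxy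
      have h2 : (⟨(x : ℕ), hx⟩ : Fin a) = ⟨(y : ℕ), hy⟩ := g.injective (Fin.ext hxy)
      rw [Fin.mk.injEq] at h2
      exact Fin.ext h2
    · rw [dif_pos hx, dif_neg hy, Fin.mk.injEq] at hxy
      have := (g ⟨(x : ℕ), hx⟩).isLt
      omega
    · rw [dif_neg hx, dif_pos hy, Fin.mk.injEq] at hxy
      have := (g ⟨(y : ℕ), hy⟩).isLt
      omega
    · rw [dif_neg hx, dif_neg hy, Fin.mk.injEq] at hxy
      exact Fin.ext (by omega)

@[simp] lemma extEmb_castAdd (g : Fin a ↪ Fin b) (x : Fin a) :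
    extEmb g N (Fin.castAdd N x) = Fin.castAdd N (g x) := by
  simp only [extEmb, Function.Embedding.coeFn_mk, Fin.coe_castAdd, x.isLt, dif_pos]
  exact Fin.ext (by dsimp only [DFunLike.coe]; simp)

lemma extEmb_id : extEmb (Function.Embedding.refl (Fin a)) N = Function.Embedding.refl _ := by
  ext x
  simp only [extEmb, Function.Embedding.coeFn_mk, Function.Embedding.refl_apply]
  split <;> simp <;> omega

lemma extEmb_trans (g : Fin a ↪ Fin b) (h : Fin b ↪ Fin c) :
    extEmb (g.trans h) N = (extEmb g N).trans (extEmb h N) := by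
  ext x
  simp only [extEmb, Function.Embedding.trans_apply, Function.Embedding.coeFn_mk]
  dsimp only [DFunLike.coe]
  by_cases hx : (x : ℕ) < a
  · simp only [hx, dif_pos, (g.toFun ⟨x, hx⟩).isLt, Fin.eta]
  · have hb : ¬ ((x : ℕ) - a + b < b) := by omega
    simp only [hx, dif_neg, hb, not_false_iff]
    omega
end EXT

@[ext] structure FImObj (m : ℕ) where
  n : Fin m → ℕ

instance FImCat (m : ℕ) : Category (FImObj m) where
  Hom A B := ∀ j, Fin (A.n j) ↪ Fin (B.n j)
  id A := fun _ => Function.Embedding.refl _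
  comp f g := fun j => (f j).trans (g j)

abbrev FImMod (m : ℕ) (k : Type) [CommRing k] := FImObj m ⥤ ModuleCat.{0} k

variable {m : ℕ} {k : Type} [CommRing k]

@[simp] lemma FIm_comp_apply {A B C : FImObj m} (f : A ⟶ B) (g : B ⟶ C) (j : Fin m) :
    (f ≫ g) j = (f j).trans (g j) := rfl

/-- Add `c` boxes in each coordinate. -/
def addObj (A : FImObj m) (c : Fin m → ℕ) : FImObj m := ⟨fun j => A.n j + c j⟩

/-- The endofunctor of `FI^m` adding `c j` elements in the `j`-th coordinate. -/
def iotaFun (m : ℕ) (c : Fin m → ℕ) : FImObj m ⥤ FImObj m where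
  obj A := addObj A c
  map f := fun j => extEmb (f j) (c j)
  map_id A := by
    funext j
    exact extEmb_id
  map_comp f g := by
    funext j
    exact extEmb_trans _ _

/-- The shift functor `Σ_c` on `FI^m`-modules. -/
def shiftFun (m : ℕ) (k : Type) [CommRing k] (c : Fin m → ℕ) : FImMod m k ⥤ FImMod m k :=
  (Functor.whiskeringLeft (FImObj m) (FImObj m) (ModuleCat k)).obj (iotaFun m c)

/-- The standard inclusion `[n] → [n + c]`. -/
def stdIncl (A : FImObj m) (c : Fin m → ℕ) : A ⟶ addObj A c :=
  fun j => ⟨Fin.castAdd (c j), Fin.castAdd_injective _ _⟩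

lemma stdIncl_naturality {A B : FImObj m} (f : A ⟶ B) (c : Fin m → ℕ) :
    f ≫ stdIncl B c = stdIncl A c ≫ (iotaFun m c).map f := by
  funext j
  refine Function.Embedding.ext fun x => ?_
  exact (extEmb_castAdd (f j) x).symm

/-- The natural transformation `V ⟶ Σ_c V`. -/
def shiftUnit (m : ℕ) (k : Type) [CommRing k] (c : Fin m → ℕ) :
    𝟭 (FImMod m k) ⟶ shiftFun m k c where
  app V :=
    { app := fun A => V.map (stdIncl A c)
      naturality := fun A B f => by
        dsimp [shiftFun]
        exact (V.map_comp _ _).symm.trans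
          ((congrArg V.map (stdIncl_naturality f c)).trans (V.map_comp _ _)) }
  naturality V W φ := by
    apply NatTrans.ext
    funext A
    exact (φ.naturality (stdIncl A c)).symm

/-- A submodule (subfunctor) of an `FI^m`-module. -/
structure FImSub (V : FImMod m k) where
  toFun : ∀ A : FImObj m, Submodule k (V.obj A)
  map_mem : ∀ {A B : FImObj m} (f : A ⟶ B) (x : V.obj A), x ∈ toFun A → V.map f x ∈ toFun B

/-- The `FI^m`-module determined by a subfunctor. -/
def subToMod {V : FImMod m k} (P : FImSub V) : FImMod m k where
  obj A := ModuleCat.of k (P.toFun A)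
  map f := ModuleCat.ofHom ((V.map f).hom.restrict (fun x hx => P.map_mem f x hx))
  map_id A := by
    apply ModuleCat.hom_ext
    apply LinearMap.ext
    intro x
    apply Subtype.ext
    change (V.map (𝟙 A)) x.1 = x.1
    rw [V.map_id]
    rfl
  map_comp f g := by
    apply ModuleCat.hom_ext
    apply LinearMap.ext
    intro x
    apply Subtype.ext
    change (V.map (f ≫ g)) x.1 = (V.map g) ((V.map f) x.1)
    rw [V.map_comp]
    rfl

/-- The inclusion of a subfunctor. -/
def subInclusion {V : FImMod m k} (P : FImSub V) : subToMod P ⟶ V where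
  app A := ModuleCat.ofHom (P.toFun A).subtype
  naturality A B f := rfl

/-- The quotient of an `FI^m`-module by a subfunctor. -/
def quotBySub (V : FImMod m k) (P : FImSub V) : FImMod m k where
  obj A := ModuleCat.of k ((V.obj A) ⧸ P.toFun A)
  map f := ModuleCat.ofHom
    (Submodule.mapQ (P.toFun _) (P.toFun _) (V.map f).hom (fun x hx => P.map_mem f x hx))
  map_id A := by
    apply ModuleCat.hom_ext
    apply Submodule.linearMap_qext
    apply LinearMap.ext
    intro x
    change Submodule.Quotient.mk ((V.map (𝟙 A)) x) = _
    rw [V.map_id]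
    rfl
  map_comp f g := by
    apply ModuleCat.hom_ext
    apply Submodule.linearMap_qext
    apply LinearMap.ext
    intro x
    change Submodule.Quotient.mk ((V.map (f ≫ g)) x) = _
    rw [V.map_comp]
    rfl

/-- The projection onto the quotient. -/
def quotProjection (V : FImMod m k) (P : FImSub V) : V ⟶ quotBySub V P where
  app A := ModuleCat.ofHom (P.toFun A).mkQ
  naturality A B f := rfl

lemma torsion_square {V : FImMod m k} {A B : FImObj m} (f : A ⟶ B) (N : ℕ) (x : V.obj A)
    (hx : V.map (stdIncl A (fun _ => N)) x = 0) :
    V.map (stdIncl B (fun _ => N)) (V.map f x) = 0 := by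
  have h1 : V.map f ≫ V.map (stdIncl B (fun _ => N)) =
      V.map (stdIncl A (fun _ => N)) ≫ V.map ((iotaFun m (fun _ => N)).map f) := by
    exact (V.map_comp _ _).symm.trans
      ((congrArg V.map (stdIncl_naturality f _)).trans (V.map_comp _ _))
  have := ConcreteCategory.congr_hom h1 x
  change (V.map f ≫ V.map (stdIncl B fun _ => N)) x = _
  rw [this]
  change (V.map ((iotaFun m fun _ => N).map f)) ((V.map (stdIncl A fun _ => N)) x) = 0
  rw [hx]; exact map_zero _

/-- The `B`-torsion subfunctor. -/
def torsionSub (V : FImMod m k) : FImSub V where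
  toFun A := ⨆ N : ℕ, LinearMap.ker (V.map (stdIncl A (fun _ => N))).hom
  map_mem {A B} f x hx := by
    refine Submodule.iSup_induction (x := x)
      (fun N => LinearMap.ker (V.map (stdIncl A (fun _ => N))).hom)
      (motive := fun y => V.map f y ∈ ⨆ N : ℕ, LinearMap.ker (V.map (stdIncl B (fun _ => N))).hom)
      hx ?_ ?_ ?_
    · intro N y hy
      exact Submodule.mem_iSup_of_mem N (torsion_square f N y hy)
    · dsimp only; rw [map_zero]; exact Submodule.zero_mem _
    · intro y z hy hz
      dsimp only; rw [map_add]; exact Submodule.add_mem _ hy hz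

/-- The `B`-torsion functor `H⁰_B`. -/
def torsionFunctor (m : ℕ) (k : Type) [CommRing k] : FImMod m k ⥤ FImMod m k where
  obj V := subToMod (torsionSub V)
  map {V W} φ :=
    { app := fun A => ModuleCat.ofHom ((φ.app A).hom.restrict (p := (torsionSub V).toFun A)
        (q := (torsionSub W).toFun A) (fun x hx => by
          refine Submodule.iSup_induction (x := x)
            (fun N => LinearMap.ker (V.map (stdIncl A (fun _ => N))).hom)
            (motive := fun y => φ.app A y ∈ ⨆ N : ℕ, LinearMap.ker (W.map (stdIncl A (fun _ => N))).hom)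
            hx ?_ ?_ ?_
          · intro N y hy
            refine Submodule.mem_iSup_of_mem N ?_
            have h2 := ConcreteCategory.congr_hom (φ.naturality (stdIncl A (fun _ => N))) y
            change (φ.app (addObj A fun _ => N)) ((V.map (stdIncl A fun _ => N)) y) =
              (W.map (stdIncl A fun _ => N)) ((φ.app A) y) at h2
            change (W.map (stdIncl A fun _ => N)) ((φ.app A) y) = 0
            rw [← h2, LinearMap.mem_ker.mp hy, map_zero]
          · dsimp only; rw [map_zero]; exact Submodule.zero_mem _
          · intro y z hy hz
            dsimp only; rw [map_add]; exact Submodule.add_mem _ hy hz))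
      naturality := fun A B f => by
        apply ModuleCat.hom_ext
        apply LinearMap.ext
        intro x
        apply Subtype.ext
        exact ConcreteCategory.congr_hom (φ.naturality f) x.1 }
  map_id V := by
    apply NatTrans.ext
    funext A
    apply ModuleCat.hom_ext
    apply LinearMap.ext
    intro x
    rfl
  map_comp φ ψ := by
    apply NatTrans.ext
    funext A
    apply ModuleCat.hom_ext
    apply LinearMap.ext
    intro x
    rfl

/-- The product of symmetric groups `S_{r_1} × ⋯ × S_{r_m}`. -/
abbrev SymGrp (m : ℕ) (r : Fin m → ℕ) := ∀ j, Equiv.Perm (Fin (r j))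

/-- The inclusion of the one-object groupoid on `S_r` into `FI^m`, sending the unique
object to `[r]`. -/
def inclFun (m : ℕ) (r : Fin m → ℕ) : SingleObj (SymGrp m r) ⥤ FImObj m where
  obj _ := ⟨r⟩
  map σ := fun j => (σ j).toEmbedding
  map_id _ := rfl
  map_comp _ _ := rfl

set_option synthInstance.maxHeartbeats 1000000 in
/-- The induced `FI^m`-module `M(W)` on a `k[S_r]`-module `W` (presented as a functor
on the one-object groupoid of `S_r`), defined as a left Kan extension. -/
noncomputable def inducedModule {m : ℕ} {k : Type} [CommRing k] (r : Fin m → ℕ)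
    (W : SingleObj (SymGrp m r) ⥤ ModuleCat.{0} k) : FImMod m k :=
  ((inclFun m r).lan).obj W

variable {m : ℕ} {k : Type} [CommRing k]

/-- `V` is (isomorphic to) an induced module generated in degree `r`. -/
def IsInducedAt (r : Fin m → ℕ) (V : FImMod m k) : Prop :=
  ∃ W : SingleObj (SymGrp m r) ⥤ ModuleCat.{0} k, Nonempty (V ≅ inducedModule r W)

/-- `V` is induced. -/
def IsInduced (V : FImMod m k) : Prop := ∃ r : Fin m → ℕ, IsInducedAt r V

/-- `V` is semi-induced: it admits a finite filtration with induced cofactors. -/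
inductive IsSemiInduced : FImMod m k → Prop where
  | of_isZero {V : FImMod m k} (h : Limits.IsZero V) : IsSemiInduced V
  | of_ext {S : ShortComplex (FImMod m k)} (hS : S.ShortExact)
      (h1 : IsInduced S.X₁) (h3 : IsSemiInduced S.X₃) : IsSemiInduced S.X₂

/-- `V` is semi-induced generated in degree `r`. -/
inductive IsSemiInducedAt (r : Fin m → ℕ) : FImMod m k → Prop where
  | of_isZero {V : FImMod m k} (h : Limits.IsZero V) : IsSemiInducedAt r V
  | of_ext {S : ShortComplex (FImMod m k)} (hS : S.ShortExact)
      (h1 : IsInducedAt r S.X₁) (h3 : IsSemiInducedAt r S.X₃) : IsSemiInducedAt r S.X₂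

/-- `V` is semi-induced generated in an integral degree `z` (which is only possible in a
nontrivial way when `z` has nonnegative coordinates). -/
def IsSemiInducedAtZ (z : Fin m → ℤ) (V : FImMod m k) : Prop :=
  (∃ d : Fin m → ℕ, (∀ j, (d j : ℤ) = z j) ∧ IsSemiInducedAt d V) ∨
    (¬ (∀ j, 0 ≤ z j) ∧ Limits.IsZero V)

/-- Finite generation of an `FI^m`-module. -/
def FImMod.FG (V : FImMod m k) : Prop :=
  ∃ S : Set (Σ A : FImObj m, V.obj A), S.Finite ∧
    ∀ P : FImSub V, (∀ v ∈ S, v.2 ∈ P.toFun v.1) → ∀ A, P.toFun A = ⊤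

/-- The maximal `B`-torsion-free quotient `V_F = V / V_T`. -/
def torsionQuot (V : FImMod m k) : FImMod m k := quotBySub V (torsionSub V)

/-- The free module `M(a) = k[Hom_{FI^m}(a, –)]`, i.e. the induced module on the regular
representation. -/
noncomputable def Mfree (m : ℕ) (k : Type) [CommRing k] (a : Fin m → ℕ) : FImMod m k :=
  coyoneda.obj (Opposite.op (⟨a⟩ : FImObj m)) ⋙ ModuleCat.free k

/-- A morphism in `FI^m` is a transition (non-invertible) iff it strictly increases some
coordinate. -/
def IsTransition {A B : FImObj m} (_f : A ⟶ B) : Prop := ∃ j, A.n j < B.n j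

/-- A `B`-torsion element. -/
def IsTorsionElt (V : FImMod m k) {A : FImObj m} (x : V.obj A) : Prop :=
  ∃ (B : FImObj m) (f : A ⟶ B), IsTransition f ∧ V.map f x = 0

/-- A `B`-torsion module. -/
def IsBTorsion (V : FImMod m k) : Prop := ∀ (A : FImObj m) (x : V.obj A), IsTorsionElt V x

/-- A `B`-torsion-free module. -/
def IsBTorsionFree (V : FImMod m k) : Prop :=
  ∀ (A : FImObj m) (x : V.obj A), IsTorsionElt V x → x = 0

lemma isTransition_comp {A B C : FImObj m} (f : A ⟶ B) (g : B ⟶ C) (hf : IsTransition f) :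
    IsTransition (f ≫ g) := by
  obtain ⟨j, hj⟩ := hf
  refine ⟨j, lt_of_lt_of_le hj ?_⟩
  simpa using Fintype.card_le_of_embedding (g j)

/-- The subfunctor of elements in the image of some transition map. -/
def degenSub (V : FImMod m k) : FImSub V where
  toFun A := ⨆ p : Σ' (B : FImObj m) (f : B ⟶ A), IsTransition f,
    LinearMap.range (V.map p.2.1).hom
  map_mem {A B} g x hx := by
    refine Submodule.iSup_induction (x := x)
      (fun p : Σ' (C : FImObj m) (f : C ⟶ A), IsTransition f =>
        LinearMap.range (V.map p.2.1).hom)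
      (motive := fun y => V.map g y ∈ ⨆ p : Σ' (C : FImObj m) (f : C ⟶ B), IsTransition f,
        LinearMap.range (V.map p.2.1).hom) hx ?_ ?_ ?_
    · rintro ⟨C, f, hf⟩ y ⟨z, rfl⟩
      refine Submodule.mem_iSup_of_mem ⟨C, f ≫ g, isTransition_comp f g hf⟩ ?_
      refine ⟨z, ?_⟩
      rw [V.map_comp]
      rfl
    · dsimp only; rw [map_zero]; exact Submodule.zero_mem _
    · intro y z hy hz
      dsimp only; rw [map_add]; exact Submodule.add_mem _ hy hz

/-- The zeroth homology functor `H₀`. -/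
def H0Fun (m : ℕ) (k : Type) [CommRing k] : FImMod m k ⥤ FImMod m k where
  obj V := quotBySub V (degenSub V)
  map {V W} φ :=
    { app := fun A => ModuleCat.ofHom (Submodule.mapQ ((degenSub V).toFun A)
        ((degenSub W).toFun A) (φ.app A).hom (by
          intro x hx
          refine Submodule.iSup_induction (x := x)
            (fun p : Σ' (C : FImObj m) (f : C ⟶ A), IsTransition f =>
              LinearMap.range (V.map p.2.1).hom)
            (motive := fun y => φ.app A y ∈ ⨆ p : Σ' (C : FImObj m) (f : C ⟶ A), IsTransition f,
              LinearMap.range (W.map p.2.1).hom) hx ?_ ?_ ?_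
          · rintro ⟨C, f, hf⟩ y ⟨z, rfl⟩
            refine Submodule.mem_iSup_of_mem ⟨C, f, hf⟩ ⟨φ.app C z, ?_⟩
            exact (ConcreteCategory.congr_hom (φ.naturality f) z).symm
          · dsimp only; rw [map_zero]; exact Submodule.zero_mem _
          · intro y z hy hz
            dsimp only; rw [map_add]; exact Submodule.add_mem _ hy hz))
      naturality := fun A B f => by
        apply ModuleCat.hom_ext
        apply Submodule.linearMap_qext
        apply LinearMap.ext
        intro x
        exact congrArg (Submodule.Quotient.mk (p := (degenSub W).toFun B))
          (ConcreteCategory.congr_hom (φ.naturality f) x) }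
  map_id V := by
    apply NatTrans.ext
    funext A
    apply ModuleCat.hom_ext
    apply Submodule.linearMap_qext
    rfl
  map_comp φ ψ := by
    apply NatTrans.ext
    funext A
    apply ModuleCat.hom_ext
    apply Submodule.linearMap_qext
    rfl

instance : (torsionFunctor m k).Additive where
  map_add {V W φ ψ} := by
    apply NatTrans.ext
    funext A
    apply ModuleCat.hom_ext
    apply LinearMap.ext
    intro x
    rfl

instance : (H0Fun m k).Additive where
  map_add {V W φ ψ} := by
    apply NatTrans.ext
    funext A
    apply ModuleCat.hom_ext
    apply Submodule.linearMap_qext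
    rfl

/-- The local cohomology `H^i_B(V)` computed from a given injective resolution. -/
noncomputable def localCohRel {V : FImMod m k} (I : InjectiveResolution V) (i : ℕ) :
    FImMod m k :=
  (((torsionFunctor m k).mapHomologicalComplex (ComplexShape.up ℕ)).obj I.cocomplex).homology i

/-- The `FI^m`-homology `H_i(V)` computed from a given projective resolution. -/
noncomputable def homologyRel {V : FImMod m k} (P : ProjectiveResolution V) (i : ℕ) :
    FImMod m k :=
  (((H0Fun m k).mapHomologicalComplex (ComplexShape.down ℕ)).obj P.complex).homology i

section Perm

/-- Extend a permutation of `Fin a` to `Fin (a+N)` fixing the added elements. -/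
def permExt (a N : ℕ) : Equiv.Perm (Fin a) →* Equiv.Perm (Fin (a + N)) where
  toFun σ := finSumFinEquiv.symm.trans ((σ.sumCongr (Equiv.refl (Fin N))).trans finSumFinEquiv)
  map_one' := by
    ext x
    simp
  map_mul' σ τ := by
    ext x
    simp only [Equiv.trans_apply, Equiv.Perm.mul_apply, Equiv.symm_apply_apply]
    rcases finSumFinEquiv.symm x with y | y <;> simp

/-- Transport permutations along an equality of sizes. -/
def permCast {a b : ℕ} (h : a = b) : Equiv.Perm (Fin a) →* Equiv.Perm (Fin b) := by
  subst h; exact MonoidHom.id _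

/-- Embed `S_c` into `S_d` for `c ≤ d`, fixing the extra points. -/
def permInto {c d : ℕ} (h : c ≤ d) : Equiv.Perm (Fin c) →* Equiv.Perm (Fin d) :=
  (permCast (by omega : c + (d - c) = d)).comp (permExt c (d - c))

/-- The inclusion `S_s ⊆ S_r` of products of symmetric groups, for `s ≤ r`
coordinatewise. -/
def symIncl {m : ℕ} {s r : Fin m → ℕ} (h : ∀ i, s i ≤ r i) : SymGrp m s →* SymGrp m r where
  toFun σ := fun i => permInto (h i) (σ i)
  map_one' := funext fun i => map_one _
  map_mul' σ τ := funext fun i => map_mul _ _ _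

variable {m : ℕ} {k : Type} [CommRing k]

/-- Restriction of a representation of `S_r` to `S_s` for `s ≤ r` coordinatewise. -/
def resRep {s r : Fin m → ℕ} (h : ∀ i, s i ≤ r i)
    (W : SingleObj (SymGrp m r) ⥤ ModuleCat.{0} k) : SingleObj (SymGrp m s) ⥤ ModuleCat.{0} k :=
  (symIncl h).toFunctor ⋙ W

end Perm

variable {m : ℕ} {k : Type} [CommRing k]

/-- The subfunctor `B^N · M(a)` of `M(a)` generated by the degree `a + N·(1,…,1)` part. -/
noncomputable def BNsub (a : Fin m → ℕ) (N : ℕ) : FImSub (Mfree m k a) where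
  toFun A := ⨆ f : addObj ⟨a⟩ (fun _ => N) ⟶ A, LinearMap.range ((Mfree m k a).map f).hom
  map_mem {A B} g x hx := by
    refine Submodule.iSup_induction (x := x)
      (fun f : addObj ⟨a⟩ (fun _ => N) ⟶ A => LinearMap.range ((Mfree m k a).map f).hom)
      (motive := fun y => (Mfree m k a).map g y ∈
        ⨆ f : addObj ⟨a⟩ (fun _ => N) ⟶ B, LinearMap.range ((Mfree m k a).map f).hom) hx ?_ ?_ ?_
    · rintro f y ⟨z, rfl⟩
      refine Submodule.mem_iSup_of_mem (f ≫ g) ⟨z, ?_⟩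
      rw [(Mfree m k a).map_comp]
      rfl
    · dsimp only; rw [map_zero]; exact Submodule.zero_mem _
    · intro y z hy hz
      dsimp only; rw [map_add]; exact Submodule.add_mem _ hy hz

/-- The quotient `M(a)/B^N·M(a)`. -/
noncomputable def MfreeModBN (a : Fin m → ℕ) (N : ℕ) : FImMod m k :=
  quotBySub (Mfree m k a) (BNsub a N)

/-- The subfunctor of `N`-bounded torsion (the kernel of `V ⟶ Σ_{N·(1,…,1)} V`). -/
def boundedTorsionSub (N : ℕ) (V : FImMod m k) : FImSub V where
  toFun A := LinearMap.ker (V.map (stdIncl A (fun _ => N))).hom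
  map_mem {A B} f x hx := torsion_square f N x hx

/-- The functor `V ↦ 𝓗om(kFI^m/B^N, V)`, realized as the `N`-bounded torsion subfunctor. -/
def HscriptFun (m : ℕ) (k : Type) [CommRing k] (N : ℕ) : FImMod m k ⥤ FImMod m k where
  obj V := subToMod (boundedTorsionSub N V)
  map {V W} φ :=
    { app := fun A => ModuleCat.ofHom ((φ.app A).hom.restrict
        (p := (boundedTorsionSub N V).toFun A) (q := (boundedTorsionSub N W).toFun A)
        (fun x hx => by
          have h2 := ConcreteCategory.congr_hom (φ.naturality (stdIncl A (fun _ => N))) x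
          change (φ.app (addObj A fun _ => N)) ((V.map (stdIncl A fun _ => N)) x) =
            (W.map (stdIncl A fun _ => N)) ((φ.app A) x) at h2
          change (W.map (stdIncl A fun _ => N)) ((φ.app A) x) = 0
          rw [← h2, LinearMap.mem_ker.mp hx, map_zero]))
      naturality := fun A B f => by
        apply ModuleCat.hom_ext
        apply LinearMap.ext
        intro x
        apply Subtype.ext
        exact ConcreteCategory.congr_hom (φ.naturality f) x.1 }
  map_id V := by
    apply NatTrans.ext
    funext A
    apply ModuleCat.hom_ext
    apply LinearMap.ext
    intro x
    rfl
  map_comp φ ψ := by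
    apply NatTrans.ext
    funext A
    apply ModuleCat.hom_ext
    apply LinearMap.ext
    intro x
    rfl

instance (N : ℕ) : (HscriptFun m k N).Additive where
  map_add {V W φ ψ} := by
    apply NatTrans.ext
    funext A
    apply ModuleCat.hom_ext
    apply LinearMap.ext
    intro x
    rfl

lemma stdIncl_succ (A : FImObj m) (N : ℕ) :
    stdIncl A (fun _ => N + 1) = stdIncl A (fun _ => N) ≫
      (fun j => Fin.castLEEmb (Nat.add_le_add_left (Nat.le_succ N) (A.n j)) :
        addObj A (fun _ => N) ⟶ addObj A (fun _ => N + 1)) := by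
  funext j
  exact Function.Embedding.ext fun x => rfl

lemma boundedTorsionSub_mono (N : ℕ) (V : FImMod m k) (A : FImObj m) :
    (boundedTorsionSub N V).toFun A ≤ (boundedTorsionSub (N + 1) V).toFun A := by
  intro x hx
  change V.map (stdIncl A (fun _ => N + 1)) x = 0
  rw [stdIncl_succ, V.map_comp]
  change (V.map _) ((V.map (stdIncl A fun _ => N)) x) = 0
  rw [LinearMap.mem_ker.mp hx, map_zero]

/-- The natural inclusion `𝓗om(kFI^m/B^N, –) ⟶ 𝓗om(kFI^m/B^{N+1}, –)`. -/
def HscriptIncl (m : ℕ) (k : Type) [CommRing k] (N : ℕ) :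
    HscriptFun m k N ⟶ HscriptFun m k (N + 1) where
  app V :=
    { app := fun A => ModuleCat.ofHom (Submodule.inclusion (boundedTorsionSub_mono N V A))
      naturality := fun A B f => by
        apply ModuleCat.hom_ext
        apply LinearMap.ext
        intro x
        apply Subtype.ext
        rfl }
  naturality V W φ := by
    apply NatTrans.ext
    funext A
    apply ModuleCat.hom_ext
    apply LinearMap.ext
    intro x
    rfl

/-- The morphism of a quotient module induced by an endomorphism preserving the subfunctor. -/
def quotMapOf {V : FImMod m k} (P : FImSub V) (φ : V ⟶ V)
    (h : ∀ (A : FImObj m) (x : V.obj A), x ∈ P.toFun A → φ.app A x ∈ P.toFun A) :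
    quotBySub V P ⟶ quotBySub V P where
  app A := ModuleCat.ofHom (Submodule.mapQ (P.toFun A) (P.toFun A) (φ.app A).hom (h A))
  naturality A B f := by
    apply ModuleCat.hom_ext
    apply Submodule.linearMap_qext
    apply LinearMap.ext
    intro x
    exact congrArg (Submodule.Quotient.mk (p := P.toFun B))
      (ConcreteCategory.congr_hom (φ.naturality f) x)

/-- A tuple of permutations as an endomorphism of `[a]` in `FI^m`. -/
def permMor (a : Fin m → ℕ) (σ : SymGrp m a) : (⟨a⟩ : FImObj m) ⟶ ⟨a⟩ :=
  fun j => (σ j).toEmbedding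

/-- The right action of `σ ∈ S_a` on `M(a) = k[Hom(a,–)]` by precomposition. -/
noncomputable def MfreeAct (a : Fin m → ℕ) (σ : SymGrp m a) : Mfree m k a ⟶ Mfree m k a :=
  Functor.whiskerRight (coyoneda.map (permMor a σ).op) (ModuleCat.free k)

lemma MfreeAct_preserves (a : Fin m → ℕ) (σ : SymGrp m a) (N : ℕ) (A : FImObj m)
    (x : (Mfree m k a).obj A) (hx : x ∈ (BNsub a N).toFun A) :
    (MfreeAct a σ).app A x ∈ (BNsub (k := k) a N).toFun A := by
  refine Submodule.iSup_induction (x := x)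
    (fun f : addObj ⟨a⟩ (fun _ => N) ⟶ A => LinearMap.range ((Mfree m k a).map f).hom)
    (motive := fun y => (MfreeAct a σ).app A y ∈
      ⨆ f : addObj ⟨a⟩ (fun _ => N) ⟶ A, LinearMap.range ((Mfree m k a).map f).hom) hx ?_ ?_ ?_
  · rintro f y ⟨z, rfl⟩
    refine Submodule.mem_iSup_of_mem f ⟨(MfreeAct a σ).app _ z, ?_⟩
    exact (ConcreteCategory.congr_hom ((MfreeAct a σ).naturality f) z).symm
  · dsimp only; rw [map_zero]; exact Submodule.zero_mem _
  · intro y z hy hz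
    dsimp only; rw [map_add]; exact Submodule.add_mem _ hy hz

/-- The action of `σ ∈ S_a` on `M(a)/B^N·M(a)`. -/
noncomputable def quotAct (a : Fin m → ℕ) (N : ℕ) (σ : SymGrp m a) :
    (MfreeModBN a N : FImMod m k) ⟶ MfreeModBN a N :=
  quotMapOf (BNsub a N) (MfreeAct a σ) (MfreeAct_preserves a σ N)

section Retraction

open Functor

universe v₁ v₂ v₃ u₁ u₂ u₃

variable {G : Type u₁} {C : Type u₂} {D : Type u₃} [Category.{v₁} G] [Category.{v₂} C]
  [Category.{v₃} D] [HasZeroMorphisms D]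
  {ι : G ⥤ C} {Φ : C ⥤ C} {η : 𝟭 C ⟶ Φ} {W : G ⥤ D} {L : C ⥤ D} {α : W ⟶ ι ⋙ L}

lemma exists_comp_eq_comp_of_isIso {X Y A : C} (e : X ⟶ Y) [IsIso e] (f : Y ⟶ Φ.obj A) :
    (∃ g : X ⟶ A, g ≫ η.app A = e ≫ f) ↔ ∃ g : Y ⟶ A, g ≫ η.app A = f := by
  constructor
  · rintro ⟨g, hg⟩
    exact ⟨inv e ≫ g, by simp [hg]⟩
  · rintro ⟨g, rfl⟩
    exact ⟨e ≫ g, Category.assoc _ _ _⟩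

variable (η) in
lemma exists_comp_eq_comp_map_iff (hη : NatTrans.Equifibered η) {X A B : C}
    (f : X ⟶ Φ.obj A) (g : A ⟶ B) :
    (∃ h : X ⟶ B, h ≫ η.app B = f ≫ Φ.map g) ↔ ∃ h : X ⟶ A, h ≫ η.app A = f := by
  constructor
  · rintro ⟨h, hh⟩
    exact ⟨(hη g).lift h f hh, (hη g).lift_snd _ _ _⟩
  · rintro ⟨h, rfl⟩
    exact ⟨h ≫ g, by simpa using congrArg (h ≫ ·) (η.naturality g)⟩

variable (η α) in
open Classical in
noncomputable def retractionComponent {A : C} {X : G} (f : ι.obj X ⟶ Φ.obj A) :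
    W.obj X ⟶ L.obj A :=
  if h : ∃ g : ι.obj X ⟶ A, g ≫ η.app A = f then α.app X ≫ L.map h.choose else 0

lemma retractionComponent_of_not_exists {A : C} {X : G} {f : ι.obj X ⟶ Φ.obj A}
    (hf : ¬ ∃ g : ι.obj X ⟶ A, g ≫ η.app A = f) : retractionComponent η α f = 0 :=
  dif_neg hf

variable [∀ A, Mono (η.app A)]

lemma retractionComponent_of_comp_eq {A : C} {X : G}
    (g : ι.obj X ⟶ A) : retractionComponent η α (g ≫ η.app A) = α.app X ≫ L.map g := by
  have h : ∃ g' : ι.obj X ⟶ A, g' ≫ η.app A = g ≫ η.app A := ⟨g, rfl⟩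
  rw [retractionComponent, dif_pos h, cancel_mono (η.app A) |>.mp h.choose_spec]

variable (η) in
lemma retractionComponent_comp_map (hη : NatTrans.Equifibered η) {A B : C} {X : G}
    (f : ι.obj X ⟶ Φ.obj A) (g : A ⟶ B) :
    retractionComponent η α (f ≫ Φ.map g) = retractionComponent η α f ≫ L.map g := by
  by_cases hf : ∃ h : ι.obj X ⟶ A, h ≫ η.app A = f
  · obtain ⟨h, rfl⟩ := hf
    have hfg : (h ≫ η.app A) ≫ Φ.map g = (h ≫ g) ≫ η.app B := by
      rw [Category.assoc, Category.assoc, ← η.naturality g, Functor.id_map]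
    rw [hfg, retractionComponent_of_comp_eq, retractionComponent_of_comp_eq, L.map_comp,
      Category.assoc]
  · rw [retractionComponent_of_not_exists hf, retractionComponent_of_not_exists
      ((exists_comp_eq_comp_map_iff η hη f g).not.mpr hf), zero_comp]

variable [IsGroupoid G]

variable (η α) in
noncomputable def retractionCocone (A : C) :
    Cocone (CostructuredArrow.proj ι (Φ.obj A) ⋙ W) where
  pt := L.obj A
  ι :=
    { app f := retractionComponent η α f.hom
      naturality f₁ f₂ φ := by
        have hφ : ι.map φ.left ≫ f₂.hom = f₁.hom := CostructuredArrow.w φ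
        change W.map φ.left ≫ retractionComponent η α f₂.hom =
          retractionComponent η α f₁.hom ≫ 𝟙 _
        rw [Category.comp_id, ← hφ]
        by_cases h₂ : ∃ g : ι.obj f₂.left ⟶ A, g ≫ η.app A = f₂.hom
        · obtain ⟨g, hg⟩ := h₂
          rw [← hg, ← Category.assoc, retractionComponent_of_comp_eq,
            retractionComponent_of_comp_eq, Functor.map_comp, α.naturality_assoc]
          rfl
        · rw [retractionComponent_of_not_exists h₂, retractionComponent_of_not_exists
            ((exists_comp_eq_comp_of_isIso _ _).not.mpr h₂), comp_zero] }

variable (hL : (LeftExtension.mk L α).IsPointwiseLeftKanExtension)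

variable (η) in
noncomputable def retractionApp (A : C) : L.obj (Φ.obj A) ⟶ L.obj A :=
  (hL (Φ.obj A)).desc (retractionCocone η α A)

lemma map_comp_retractionApp {A : C} {X : G} (f : ι.obj X ⟶ Φ.obj A) :
    α.app X ≫ L.map f ≫ retractionApp η hL A = retractionComponent η α f :=
  (Category.assoc _ _ _).symm.trans <|
    (hL (Φ.obj A)).fac (retractionCocone η α A) (CostructuredArrow.mk f)

variable (η) in
noncomputable def retractionOfEquifibered (hη : NatTrans.Equifibered η) : Φ ⋙ L ⟶ L where
  app := retractionApp η hL
  naturality A B g := (hL (Φ.obj A)).hom_ext' fun X f => by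
    change α.app X ≫ L.map f ≫ L.map (Φ.map g) ≫ _ = α.app X ≫ L.map f ≫ _
    rw [← L.map_comp_assoc, map_comp_retractionApp, retractionComponent_comp_map η hη,
      ← map_comp_retractionApp hL, Category.assoc, Category.assoc]

lemma map_app_comp_retractionOfEquifibered_app (hη : NatTrans.Equifibered η) (A : C) :
    L.map (η.app A) ≫ (retractionOfEquifibered η hL hη).app A = 𝟙 (L.obj A) :=
  (hL A).hom_ext' fun X f => by
    change α.app X ≫ L.map f ≫ L.map (η.app A) ≫ retractionApp η hL A = α.app X ≫ L.map f ≫ _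
    rw [← L.map_comp_assoc, map_comp_retractionApp, retractionComponent_of_comp_eq,
      Category.comp_id]

end Retraction

lemma val_lt_of_val_extEmb_lt {a b N : ℕ} (g : Fin a ↪ Fin b) {x : Fin (a + N)}
    (hx : (extEmb g N x : ℕ) < b) : (x : ℕ) < a := by
  by_contra hxa
  have hval : (extEmb g N x : ℕ) = x - a + b := by
    simp only [extEmb]
    dsimp only [DFunLike.coe]
    rw [dif_neg hxa]
  omega

def restrictHom {P A : FImObj m} {c : Fin m → ℕ} (f : P ⟶ addObj A c)
    (hf : ∀ j x, (f j x : ℕ) < A.n j) : P ⟶ A :=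
  fun j => ⟨fun x => (f j x).castLT (hf j x),
    fun x y hxy => (f j).injective (Fin.ext (by simpa using congrArg Fin.val hxy))⟩

lemma restrictHom_comp_stdIncl {P A : FImObj m} {c : Fin m → ℕ} (f : P ⟶ addObj A c)
    (hf : ∀ j x, (f j x : ℕ) < A.n j) : restrictHom f hf ≫ stdIncl A c = f :=
  funext fun _ => Function.Embedding.ext fun _ => Fin.ext rfl

variable (m) in
def stdInclNatTrans (c : Fin m → ℕ) : 𝟭 (FImObj m) ⟶ iotaFun m c where
  app A := stdIncl A c
  naturality _ _ f := stdIncl_naturality f c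

instance (c : Fin m → ℕ) (A : FImObj m) : Mono ((stdInclNatTrans m c).app A) :=
  ⟨fun _ _ hgh => funext fun j => Function.Embedding.ext fun x =>
    Fin.castAdd_injective _ _ (DFunLike.congr_fun (congrFun hgh j) x)⟩

lemma stdInclNatTrans_equifibered (c : Fin m → ℕ) :
    NatTrans.Equifibered (stdInclNatTrans m c) := fun A B g => by
  set η := stdInclNatTrans m c
  have lt_of_cone (s : PullbackCone (η.app B) ((iotaFun m c).map g)) (j : Fin m)
      (x : Fin (s.pt.n j)) : (s.snd j x : ℕ) < A.n j := by
    have hx := DFunLike.congr_fun (congrFun s.condition j) x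
    refine val_lt_of_val_extEmb_lt (g j) (hx ▸ ?_)
    exact (s.fst j x).isLt
  refine IsPullback.of_isLimit' ⟨η.naturality g⟩ <| PullbackCone.IsLimit.mk _
    (fun s => restrictHom s.snd (lt_of_cone s)) (fun s => ?_)
    (fun s => restrictHom_comp_stdIncl _ _) (fun s l _ hl => ?_)
  · rw [← cancel_mono (η.app B), Category.assoc, η.naturality, s.condition, ← Category.assoc]
    exact congrArg (· ≫ _) (restrictHom_comp_stdIncl _ _)
  · rw [← cancel_mono (η.app A)]
    exact hl.trans (restrictHom_comp_stdIncl _ _).symm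

noncomputable def inducedModuleIsPointwiseLeftKanExtension (r : Fin m → ℕ)
    (W : SingleObj (SymGrp m r) ⥤ ModuleCat.{0} k) :
    (Functor.LeftExtension.mk (inducedModule r W)
      ((inclFun m r).lanUnit.app W)).IsPointwiseLeftKanExtension :=
  haveI : (inducedModule r W).IsLeftKanExtension ((inclFun m r).lanUnit.app W) :=
    inferInstanceAs (((inclFun m r).lan.obj W).IsLeftKanExtension _)
  Functor.isPointwiseLeftKanExtensionOfIsLeftKanExtension _ _

/-- the standard inclusions `[n] → [n + e_j]` induce a natural map
`V ⟶ Σ_j V`, which is a split injection whenever `V = M(W)` is induced. -/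
theorem stmt4 (m : ℕ) (k : Type) [CommRing k] (j : Fin m) :
    (∀ (V : FImMod m k) (A : FImObj m),
      ((shiftUnit m k (Pi.single j 1)).app V).app A = V.map (stdIncl A (Pi.single j 1))) ∧
    ∀ (r : Fin m → ℕ) (W : SingleObj (SymGrp m r) ⥤ ModuleCat.{0} k),
      IsSplitMono ((shiftUnit m k (Pi.single j 1)).app (inducedModule r W)) := by
  refine ⟨fun V A => rfl, fun r W => ⟨⟨?_, ?_⟩⟩⟩
  · exact retractionOfEquifibered (stdInclNatTrans m _)
      (hL := inducedModuleIsPointwiseLeftKanExtension r W) (stdInclNatTrans_equifibered _)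
  · ext A : 2
    exact map_app_comp_retractionOfEquifibered_app (η := stdInclNatTrans m _) _ _ A
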